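/- arXiv:2006.10032 — 3 statements merged into one kernel-verified Lean document; each statement's English description precedes it below -/
import Mathlib

section
/- Let ℓ(t) = exp(−|t|), g_σ(μ) = E_{z∼N(μ,σ²)}[ℓ(z)], q_σ(μ) = ∂g_σ(μ)/∂σ, and define r(σ) = σ² + σ·√(2·log(4√2/(√π σ))) if 0 < σ ≤ 4√2/√π, and r(σ) = 2σ² if σ > 4√2/√π. Then for all μ with |μ| ≥ r(σ), we have q_σ(μ) ≥ (1/4)·σ·exp(−|μ|) > 0. -/
open MeasureTheory ProbabilityTheory Real

/-- `g σ μ = E_{z ∼ N(μ, σ²)}[exp(−|z|)]`. -/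
noncomputable def gConv (σ μ : ℝ) : ℝ :=
  ∫ z, Real.exp (-|z|) ∂(gaussianReal μ (σ ^ 2).toNNReal)

/-- The threshold `r(σ)`. -/
noncomputable def rThresh (σ : ℝ) : ℝ :=
  if σ ≤ 4 * Real.sqrt 2 / Real.sqrt π then
    σ ^ 2 + σ * Real.sqrt (2 * Real.log (4 * Real.sqrt 2 / (Real.sqrt π * σ)))
  else 2 * σ ^ 2

/-!
Splitting `E[exp(-|z|)]` at `z = 0` and completing the square gives the closed form
`√(2π) g(s, μ) = T(s, μ) + T(s, -μ)` with `T(s, μ) = exp(s²/2 - μ) ∫_{s - μ/s}^∞ exp(-x²/2) dx`,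
and differentiating, `√(2π) q = σ (T(σ, μ) + T(σ, -μ)) - 2 exp(-μ²/(2σ²))`.
Once `|μ| ≥ σ²`, the tail integral in `T(σ, |μ|)` is at least half the full Gaussian integral, so
the first term is at least `σ √(2π) exp(σ²/2 - |μ|) / 2`; the threshold `r(σ)` is chosen exactly so
that the Gaussian term is at most half of this, and `exp(σ²/2) ≥ 1` finishes the bound.
-/

open Set

noncomputable def gaussTail (t : ℝ) : ℝ := ∫ x in Ioi t, exp (-x ^ 2 / 2)

lemma integrable_exp_neg_sq_div_two : Integrable fun x : ℝ => exp (-x ^ 2 / 2) := by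
  simpa [neg_div, div_eq_inv_mul] using integrable_exp_neg_mul_sq (b := 1 / 2) (by norm_num)

lemma gaussTail_nonneg (t : ℝ) : 0 ≤ gaussTail t :=
  setIntegral_nonneg measurableSet_Ioi fun _ _ => (exp_pos _).le

lemma gaussTail_zero : gaussTail 0 = √(2 * π) / 2 := by
  have h := integral_gaussian_Ioi (1 / 2)
  simp only [neg_mul, one_div, ← div_eq_inv_mul, div_inv_eq_mul] at h
  simp only [gaussTail, neg_div, h, mul_comm π]

lemma sqrt_two_mul_pi_div_two_le_gaussTail {t : ℝ} (ht : t ≤ 0) : √(2 * π) / 2 ≤ gaussTail t :=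
  gaussTail_zero ▸ setIntegral_mono_set integrable_exp_neg_sq_div_two.integrableOn
    (.of_forall fun _ => (exp_pos _).le) (Ioi_subset_Ioi ht).eventuallyLE

lemma hasDerivAt_gaussTail (t : ℝ) : HasDerivAt gaussTail (-exp (-t ^ 2 / 2)) t := by
  have hcont : Continuous fun x : ℝ => exp (-x ^ 2 / 2) := by fun_prop
  have hsplit (u : ℝ) : gaussTail u = gaussTail 0 - ∫ x in (0 : ℝ)..u, exp (-x ^ 2 / 2) := by
    have hint := integrable_exp_neg_sq_div_two
    have h0 := intervalIntegral.integral_Iic_add_Ioi (b := 0) hint.integrableOn hint.integrableOn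
    have hu := intervalIntegral.integral_Iic_add_Ioi (b := u) hint.integrableOn hint.integrableOn
    have h0u := intervalIntegral.integral_Iic_sub_Iic (a := 0) (b := u) hint.integrableOn
      hint.integrableOn
    rw [gaussTail, gaussTail]
    linarith
  have hF := intervalIntegral.integral_hasDerivAt_right (hcont.intervalIntegrable 0 t)
    (hcont.stronglyMeasurableAtFilter _ _) hcont.continuousAt
  simpa using ((hasDerivAt_const t (gaussTail 0)).sub hF).congr_of_eventuallyEq
    (.of_forall hsplit)

lemma setIntegral_Ioi_comp_sub_right {E : Type*} [NormedAddCommGroup E] [NormedSpace ℝ E]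
    (g : ℝ → E) (a c : ℝ) :
    ∫ z in Ioi a, g (z - c) = ∫ y in Ioi (a - c), g y := by
  have h := (measurePreserving_sub_right volume c).setIntegral_preimage_emb
    (measurableEmbedding_subRight c) g (Ioi (a - c))
  rwa [preimage_sub_const_Ioi, sub_add_cancel] at h

lemma integral_Ioi_exp_neg_sq_div (a c : ℝ) {s : ℝ} (hs : 0 < s) :
    ∫ z in Ioi a, exp (-((z - c) / s) ^ 2 / 2) = s * gaussTail ((a - c) / s) := by
  rw [setIntegral_Ioi_comp_sub_right (fun y => exp (-(y / s) ^ 2 / 2)) a c]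
  have h := integral_comp_mul_left_Ioi (fun y => exp (-y ^ 2 / 2)) (a - c) (inv_pos.mpr hs)
  simp only [inv_inv, smul_eq_mul, ← div_eq_inv_mul] at h
  rw [gaussTail, ← h]

noncomputable def expGaussTail (s μ : ℝ) : ℝ := exp (s ^ 2 / 2 - μ) * gaussTail (s - μ / s)

lemma setIntegral_Ioi_exp_neg_mul_gaussianPDFReal (μ : ℝ) {s : ℝ} (hs : 0 < s) :
    ∫ z in Ioi 0, exp (-z) * gaussianPDFReal μ (s ^ 2).toNNReal z
      = expGaussTail s μ / √(2 * π) := by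
  -- complete the square: `-z - (z - μ)² / (2s²) = s²/2 - μ - ((z - (μ - s²)) / s)² / 2`
  have hpdf (z : ℝ) : exp (-z) * gaussianPDFReal μ (s ^ 2).toNNReal z
      = (√(2 * π) * s)⁻¹ * exp (s ^ 2 / 2 - μ) * exp (-((z - (μ - s ^ 2)) / s) ^ 2 / 2) := by
    rw [gaussianPDFReal, Real.coe_toNNReal _ (sq_nonneg s), sqrt_mul (by positivity),
      sqrt_sq hs.le, mul_left_comm, mul_assoc, ← exp_add, ← exp_add]
    congr 2
    field_simp
    ring
  simp_rw [hpdf, integral_const_mul, integral_Ioi_exp_neg_sq_div 0 _ hs, expGaussTail]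
  field_simp
  ring_nf

lemma gaussianPDFReal_neg (μ : ℝ) (v : NNReal) (x : ℝ) :
    gaussianPDFReal μ v (-x) = gaussianPDFReal (-μ) v x := by
  simp only [gaussianPDFReal]
  ring_nf

lemma gConv_eq_expGaussTail {s : ℝ} (μ : ℝ) (hs : 0 < s) :
    gConv s μ = (expGaussTail s μ + expGaussTail s (-μ)) / √(2 * π) := by
  set v := (s ^ 2).toNNReal
  have hv : v ≠ 0 := by simpa [v] using hs.ne'
  set f := fun z => exp (-|z|) * gaussianPDFReal μ v z
  have hf : Integrable f :=
    (integrable_gaussianPDFReal μ v).mono' (by fun_prop) (.of_forall fun z => by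
      rw [norm_mul, norm_of_nonneg (exp_pos _).le, norm_of_nonneg (gaussianPDFReal_nonneg μ v z)]
      exact mul_le_of_le_one_left (gaussianPDFReal_nonneg μ v z) (exp_le_one_iff.mpr (by simp)))
  have hpos : ∫ z in Ioi 0, f z = expGaussTail s μ / √(2 * π) := by
    rw [← setIntegral_Ioi_exp_neg_mul_gaussianPDFReal μ hs]
    exact setIntegral_congr_fun measurableSet_Ioi fun z hz => by simp [f, v, abs_of_pos hz.out]
  have hneg : ∫ z in Iic 0, f z = expGaussTail s (-μ) / √(2 * π) := by
    rw [← neg_zero, ← integral_comp_neg_Ioi, ← setIntegral_Ioi_exp_neg_mul_gaussianPDFReal (-μ) hs]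
    exact setIntegral_congr_fun measurableSet_Ioi fun z hz => by
      simp [f, v, abs_of_pos hz.out, gaussianPDFReal_neg]
  rw [gConv, integral_gaussianReal_eq_integral_smul hv]
  simp only [smul_eq_mul, mul_comm (gaussianPDFReal μ v _)]
  rw [← intervalIntegral.integral_Iic_add_Ioi hf.integrableOn hf.integrableOn, hpos, hneg]
  ring

lemma hasDerivAt_expGaussTail (μ : ℝ) {σ : ℝ} (hσ : σ ≠ 0) :
    HasDerivAt (fun s => expGaussTail s μ)
      (σ * expGaussTail σ μ - (1 + μ / σ ^ 2) * exp (-μ ^ 2 / (2 * σ ^ 2))) σ := by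
  have hexp : HasDerivAt (fun s => exp (s ^ 2 / 2 - μ)) (exp (σ ^ 2 / 2 - μ) * σ) σ := by
    simpa using (((hasDerivAt_pow 2 σ).div_const 2).sub_const μ).exp
  have harg : HasDerivAt (fun s => s - μ / s) (1 + μ / σ ^ 2) σ :=
    ((hasDerivAt_id' σ).sub ((hasDerivAt_const σ μ).div (hasDerivAt_id' σ) hσ)).congr_deriv
      (by ring)
  have hcollapse : exp (σ ^ 2 / 2 - μ) * exp (-(σ - μ / σ) ^ 2 / 2)
      = exp (-μ ^ 2 / (2 * σ ^ 2)) := by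
    rw [← exp_add]
    congr 1
    field_simp
    ring
  refine (hexp.mul ((hasDerivAt_gaussTail _).comp σ harg)).congr_deriv ?_
  simp only [expGaussTail, Function.comp_apply, ← hcollapse]
  ring

lemma hasDerivAt_gConv (μ : ℝ) {σ : ℝ} (hσ : 0 < σ) :
    HasDerivAt (fun s => gConv s μ)
      ((σ * (expGaussTail σ μ + expGaussTail σ (-μ)) - 2 * exp (-μ ^ 2 / (2 * σ ^ 2)))
        / √(2 * π)) σ := by
  have h := ((hasDerivAt_expGaussTail μ hσ.ne').add
    (hasDerivAt_expGaussTail (-μ) hσ.ne')).div_const √(2 * π)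
  refine (h.congr_of_eventuallyEq ?_).congr_deriv ?_
  · filter_upwards [eventually_gt_nhds hσ] with s hs using gConv_eq_expGaussTail μ hs
  · rw [neg_sq]
    ring

lemma expGaussTail_nonneg (s μ : ℝ) : 0 ≤ expGaussTail s μ :=
  mul_nonneg (exp_pos _).le (gaussTail_nonneg _)

lemma expGaussTail_abs_le_add (s μ : ℝ) :
    expGaussTail s |μ| ≤ expGaussTail s μ + expGaussTail s (-μ) := by
  rcases abs_choice μ with h | h <;> rw [h]
  · exact le_add_of_nonneg_right (expGaussTail_nonneg s _)
  · exact le_add_of_nonneg_left (expGaussTail_nonneg s _)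

lemma exp_mul_le_expGaussTail {σ m : ℝ} (hσ : 0 < σ) (hm : σ ^ 2 ≤ m) :
    exp (σ ^ 2 / 2 - m) * (√(2 * π) / 2) ≤ expGaussTail σ m := by
  refine mul_le_mul_of_nonneg_left (sqrt_two_mul_pi_div_two_le_gaussTail ?_) (exp_pos _).le
  rw [sub_nonpos, le_div_iff₀ hσ, ← sq]
  exact hm

section Threshold

variable {σ m : ℝ}

lemma sq_le_of_rThresh_le (hσ : 0 < σ) (hm : rThresh σ ≤ m) : σ ^ 2 ≤ m := by
  unfold rThresh at hm
  split_ifs at hm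
  · nlinarith [mul_nonneg hσ.le (sqrt_nonneg (2 * log (4 * √2 / (√π * σ))))]
  · nlinarith

lemma div_le_exp_of_rThresh_le (hσ : 0 < σ) (hm : rThresh σ ≤ m) :
    4 * √2 / (√π * σ) ≤ exp ((m - σ ^ 2) ^ 2 / (2 * σ ^ 2)) := by
  have hπ : 0 < √π := sqrt_pos.mpr pi_pos
  have hC : 0 < 4 * √2 / (√π * σ) := by positivity
  unfold rThresh at hm
  split_ifs at hm with hsmall
  · set L := log (4 * √2 / (√π * σ))
    have hL : 0 ≤ L := by
      refine log_nonneg ?_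
      rw [le_div_iff₀ (by positivity), one_mul, mul_comm]
      exact (le_div_iff₀ hπ).mp hsmall
    have hroot : σ * √(2 * L) ≤ m - σ ^ 2 := by linarith
    have hsq : σ ^ 2 * (2 * L) ≤ (m - σ ^ 2) ^ 2 := by
      have := pow_le_pow_left₀ (by positivity) hroot 2
      rwa [mul_pow, sq_sqrt (by positivity)] at this
    rw [← exp_log hC, exp_le_exp, le_div_iff₀ (by positivity)]
    linarith
  · have hlt : 4 * √2 / (√π * σ) < 1 := by
      rw [div_lt_one (by positivity), mul_comm √π]
      exact (div_lt_iff₀ hπ).mp (not_le.mp hsmall)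
    exact hlt.le.trans (one_le_exp (by positivity))

lemma two_mul_exp_le_of_rThresh_le (hσ : 0 < σ) (hm : rThresh σ ≤ m) :
    2 * exp (-m ^ 2 / (2 * σ ^ 2)) ≤ σ * √(2 * π) / 4 * exp (σ ^ 2 / 2 - m) := by
  have hsplit : exp (σ ^ 2 / 2 - m)
      = exp ((m - σ ^ 2) ^ 2 / (2 * σ ^ 2)) * exp (-m ^ 2 / (2 * σ ^ 2)) := by
    rw [← exp_add]
    congr 1
    field_simp
    ring
  have htwo : σ * √(2 * π) / 4 * (4 * √2 / (√π * σ)) = 2 := by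
    have hπ : √π ≠ 0 := (sqrt_pos.mpr pi_pos).ne'
    rw [sqrt_mul zero_le_two]
    field_simp
    rw [sq_sqrt zero_le_two]
  rw [hsplit, ← mul_assoc]
  refine mul_le_mul_of_nonneg_right ?_ (exp_pos _).le
  calc (2 : ℝ) = σ * √(2 * π) / 4 * (4 * √2 / (√π * σ)) := htwo.symm
    _ ≤ _ := mul_le_mul_of_nonneg_left (div_le_exp_of_rThresh_le hσ hm) (by positivity)

end Threshold

/-- For `|μ| ≥ r(σ)`, the derivative `q_σ(μ) = ∂g_σ(μ)/∂σ` satisfies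
`q_σ(μ) ≥ (1/4)·σ·exp(−|μ|) > 0`. -/
theorem deriv_gaussian_smoothed_loss_positive (σ μ q : ℝ) (hσ : 0 < σ)
    (hμ : rThresh σ ≤ |μ|)
    (hq : HasDerivAt (fun s => gConv s μ) q σ) :
    (1 / 4) * σ * Real.exp (-|μ|) ≤ q ∧ 0 < (1 / 4) * σ * Real.exp (-|μ|) := by
  refine ⟨?_, by positivity⟩
  have hsqrt : 0 < √(2 * π) := sqrt_pos.mpr (by positivity)
  have hsum : σ * (exp (σ ^ 2 / 2 - |μ|) * (√(2 * π) / 2))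
      ≤ σ * (expGaussTail σ μ + expGaussTail σ (-μ)) :=
    mul_le_mul_of_nonneg_left ((exp_mul_le_expGaussTail hσ (sq_le_of_rThresh_le hσ hμ)).trans
      (expGaussTail_abs_le_add σ μ)) hσ.le
  have hgauss := two_mul_exp_le_of_rThresh_le hσ hμ
  rw [sq_abs] at hgauss
  have hshift : σ * √(2 * π) / 4 * exp (-|μ|) ≤ σ * √(2 * π) / 4 * exp (σ ^ 2 / 2 - |μ|) :=
    mul_le_mul_of_nonneg_left (exp_le_exp.mpr (by nlinarith)) (by positivity)
  rw [hq.unique (hasDerivAt_gConv μ hσ), le_div_iff₀ hsqrt]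
  linarith
end

section
/- Let x₁ be a random vector in ℝ^{d₁} with E[‖x₁‖₂] finite, let ℓ(t) = exp(−|t|), and g_σ(μ) = E_{z∼N(μ,σ²)}[ℓ(z)] for σ ≤ 1. Then for any w₁ with ‖w₁‖₂ ≤ R, E_{x₁}[g_σ(w₁ᵀx₁)] ≥ 0.25·exp(−R·E[‖x₁‖₂]). -/
/-! Since `|z| ≤ |μ| + 1/2 + (z - μ)²/2`, a Gaussian of mean `μ` and variance at most `1` has
`E|Z| ≤ |μ| + 1`, so Jensen's inequality for `exp` gives `g_σ(μ) ≥ exp(-|μ| - 1) ≥ exp(-|μ|) / 4`.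
Cauchy–Schwarz turns this into `g_σ(w₁ᵀx₁) ≥ exp(-R‖x₁‖) / 4`, and a second application of Jensen
moves the expectation inside the exponential. -/

open MeasureTheory ProbabilityTheory Real
open scoped NNReal

section ExpOfNonpos

variable {α : Type*} [MeasurableSpace α] {P : Measure α} {f : α → ℝ}

lemma integrable_exp_of_nonpos [IsFiniteMeasure P] (hf : AEStronglyMeasurable f P)
    (hf0 : ∀ᵐ x ∂P, f x ≤ 0) : Integrable (fun x => exp (f x)) P := by
  refine Integrable.mono' (integrable_const 1) (continuous_exp.comp_aestronglyMeasurable hf) ?_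
  filter_upwards [hf0] with x hx
  rw [norm_of_nonneg (exp_pos _).le]
  exact exp_le_one_iff.mpr hx

lemma exp_integral_le_integral_exp_of_nonpos [IsProbabilityMeasure P] (hf : Integrable f P)
    (hf0 : ∀ᵐ x ∂P, f x ≤ 0) : exp (∫ x, f x ∂P) ≤ ∫ x, exp (f x) ∂P :=
  convexOn_exp.map_integral_le continuous_exp.continuousOn isClosed_univ
    (ae_of_all _ fun _ => Set.mem_univ _) hf (integrable_exp_of_nonpos hf.aestronglyMeasurable hf0)

end ExpOfNonpos

lemma integral_abs_gaussianReal_le (μ : ℝ) (v : ℝ≥0) :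
    ∫ z, |z| ∂gaussianReal μ v ≤ |μ| + (1 + v) / 2 := by
  have habs : Integrable (fun z => |z|) (gaussianReal μ v) :=
    (memLp_one_iff_integrable.mp (memLp_id_gaussianReal 1)).abs
  have hsq : Integrable (fun z => (z - μ) ^ 2) (gaussianReal μ v) :=
    ((memLp_id_gaussianReal' 2 (by norm_num)).sub (memLp_const μ)).integrable_sq
  have hvar : ∫ z, (z - μ) ^ 2 ∂gaussianReal μ v = v := by
    rw [← variance_fun_id_gaussianReal (μ := μ) (v := v),
      variance_eq_integral measurable_id'.aemeasurable, integral_id_gaussianReal]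
  have hbound : ∀ z : ℝ, |z| ≤ |μ| + 1 / 2 + (z - μ) ^ 2 / 2 := fun z => by
    nlinarith [abs_sub_abs_le_abs_sub z μ, sq_nonneg (|z - μ| - 1), sq_abs (z - μ)]
  have hbound_int : Integrable (fun z => |μ| + 1 / 2 + (z - μ) ^ 2 / 2) (gaussianReal μ v) :=
    (integrable_const _).add (hsq.div_const 2)
  calc ∫ z, |z| ∂gaussianReal μ v
      ≤ ∫ z, |μ| + 1 / 2 + (z - μ) ^ 2 / 2 ∂gaussianReal μ v :=
        integral_mono habs hbound_int hbound
    _ = |μ| + (1 + v) / 2 := by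
        rw [integral_add (integrable_const _) (hsq.div_const 2), integral_const, integral_div,
          hvar]
        simp only [probReal_univ, smul_eq_mul, one_mul]
        ring

lemma quarter_mul_exp_neg_abs_le_gConv {σ : ℝ} (hσ : |σ| ≤ 1) (μ : ℝ) :
    1 / 4 * exp (-|μ|) ≤ gConv σ μ := by
  set v := (σ ^ 2).toNNReal
  have hv : (v : ℝ) ≤ 1 := by
    rw [Real.coe_toNNReal _ (sq_nonneg σ)]
    nlinarith [abs_nonneg σ, sq_abs σ]
  have hjensen : exp (-∫ z, |z| ∂gaussianReal μ v) ≤ gConv σ μ := by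
    rw [← integral_neg]
    exact exp_integral_le_integral_exp_of_nonpos
      (memLp_one_iff_integrable.mp (memLp_id_gaussianReal 1)).abs.neg
      (ae_of_all _ fun z => by simp)
  have hquarter : 1 / 4 ≤ exp (-1) := by
    rw [exp_neg, one_div]
    exact inv_anti₀ (exp_pos 1) (exp_one_lt_d9.trans (by norm_num)).le
  calc 1 / 4 * exp (-|μ|) ≤ exp (-1) * exp (-|μ|) := by gcongr
    _ = exp (-(|μ| + 1)) := by rw [← exp_add]; ring_nf
    _ ≤ exp (-∫ z, |z| ∂gaussianReal μ v) := by
        gcongr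
        linarith [integral_abs_gaussianReal_le μ v]
    _ ≤ gConv σ μ := hjensen

theorem expected_loss_lower_bound_general
    {d : ℕ} {Ω : Type*} [MeasureSpace Ω] (P : Measure Ω) [IsProbabilityMeasure P]
    (x₁ : Ω → EuclideanSpace ℝ (Fin d))
    (hnorm : Integrable (fun ω => ‖x₁ ω‖) P)
    (w₁ : EuclideanSpace ℝ (Fin d)) (R σ : ℝ)
    (hR : ‖w₁‖ ≤ R) (hσ0 : 0 < σ) (hσ1 : σ ≤ 1)
    (hintg : Integrable (fun ω => gConv σ (inner ℝ w₁ (x₁ ω) : ℝ)) P) :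
    0.25 * Real.exp (-R * ∫ ω, ‖x₁ ω‖ ∂P) ≤
      ∫ ω, gConv σ (inner ℝ w₁ (x₁ ω) : ℝ) ∂P := by
  have hR0 : 0 ≤ R := (norm_nonneg w₁).trans hR
  have hpointwise : ∀ ω, 1 / 4 * exp (-R * ‖x₁ ω‖) ≤ gConv σ (inner ℝ w₁ (x₁ ω)) := fun ω => by
    refine le_trans ?_ (quarter_mul_exp_neg_abs_le_gConv (abs_le.mpr ⟨by linarith, hσ1⟩) _)
    gcongr
    rw [neg_mul, neg_le_neg_iff]
    exact (abs_real_inner_le_norm _ _).trans (by gcongr)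
  have hnonpos : ∀ ω, -R * ‖x₁ ω‖ ≤ 0 := fun ω => by nlinarith [norm_nonneg (x₁ ω)]
  have hjensen : exp (∫ ω, -R * ‖x₁ ω‖ ∂P) ≤ ∫ ω, exp (-R * ‖x₁ ω‖) ∂P :=
    exp_integral_le_integral_exp_of_nonpos (hnorm.const_mul (-R)) (ae_of_all _ hnonpos)
  calc 0.25 * exp (-R * ∫ ω, ‖x₁ ω‖ ∂P) ≤ 1 / 4 * ∫ ω, exp (-R * ‖x₁ ω‖) ∂P := by
        rw [integral_const_mul] at hjensen
        linarith
    _ = ∫ ω, 1 / 4 * exp (-R * ‖x₁ ω‖) ∂P := (integral_const_mul _ _).symm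
    _ ≤ _ := integral_mono
          ((integrable_exp_of_nonpos (hnorm.const_mul (-R)).aestronglyMeasurable
            (ae_of_all _ hnonpos)).const_mul _) hintg hpointwise

/-- Lower bound on the expected smoothed loss: for `0 < σ ≤ 1` and `‖w₁‖ ≤ R`,
`E_{x₁}[g_σ(w₁ᵀx₁)] ≥ 0.25·exp(−R·E[‖x₁‖])`. -/
theorem expected_loss_lower_bound
    {d : ℕ} {Ω : Type*} [MeasureSpace Ω] (P : Measure Ω) [IsProbabilityMeasure P]
    (x₁ : Ω → EuclideanSpace ℝ (Fin d)) (hmeas : Measurable x₁)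
    (hnorm : Integrable (fun ω => ‖x₁ ω‖) P)
    (w₁ : EuclideanSpace ℝ (Fin d)) (R σ : ℝ)
    (hR : ‖w₁‖ ≤ R) (hσ0 : 0 < σ) (hσ1 : σ ≤ 1)
    (hintg : Integrable (fun ω => gConv σ (inner ℝ w₁ (x₁ ω) : ℝ)) P) :
    0.25 * Real.exp (-R * ∫ ω, ‖x₁ ω‖ ∂P) ≤
      ∫ ω, gConv σ (inner ℝ w₁ (x₁ ω) : ℝ) ∂P :=
  expected_loss_lower_bound_general P x₁ hnorm w₁ R σ hR hσ0 hσ1 hintg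
end

section
/- Let g' denote the derivative of g_σ(μ) = E_{z∼N(μ,σ²)}[exp(−|z|)] with respect to μ. Then g_σ'(μ)·μ < 0 for all μ ≠ 0; i.e., g_σ is strictly decreasing on (0,∞) and strictly increasing on (−∞,0). Consequently, for any random vector x₁ and weight w₁, ⟨E[g_σ'(w₁ᵀx₁)·x₁], w₁⟩ = E[g_σ'(w₁ᵀx₁)·(w₁ᵀx₁)] ≤ 0, with strict inequality whenever P(w₁ᵀx₁ ≠ 0) > 0. -/
/-!
Shifting the mean, `g_σ(μ) = E[exp(-|z + μ|)]` for `z ∼ N(0, σ²)`; since `exp(-|·|)` is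
`1`-Lipschitz, one may differentiate under the integral, so `g_σ'(μ) = E_{N(μ,σ²)}[ψ]` with
`ψ(t) = -sign t · exp(-|t|)` odd and `t ψ(t) < 0` for `t ≠ 0`. Writing `p_μ` for the density of
`N(μ, σ²)`, oddness gives `2 μ E_{N(μ,σ²)}[ψ] = ∫ μ ψ(x) (p_μ(x) - p_{-μ}(x)) dx`, and
`p_μ(x) - p_{-μ}(x)` has the sign of `μ x`, so the integrand is negative off `x = 0`.
-/

open MeasureTheory ProbabilityTheory Real Set
open scoped NNReal

lemma lipschitzOnWith_exp_neg_Ici : LipschitzOnWith 1 (fun s : ℝ => exp (-s)) (Ici 0) := by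
  refine (convex_Ici 0).lipschitzOnWith_of_nnnorm_hasDerivWithin_le
    (fun s _ => (hasDerivAt_neg s).exp.hasDerivWithinAt) fun s hs => ?_
  rw [← NNReal.coe_le_coe, coe_nnnorm, norm_mul, norm_neg, norm_one, mul_one,
    norm_of_nonneg (exp_nonneg _)]
  exact exp_le_one_iff.2 (neg_nonpos.2 hs)

lemma lipschitzWith_exp_neg_abs : LipschitzWith 1 (fun t : ℝ => exp (-|t|)) := by
  have habs : LipschitzWith 1 (fun t : ℝ => |t|) := LipschitzWith.of_dist_le_mul fun a b => by
    simpa [Real.dist_eq] using abs_abs_sub_abs_le_abs_sub a b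
  simpa [Function.comp_def] using
    lipschitzOnWith_exp_neg_Ici.comp (habs.lipschitzOnWith (s := univ)) fun t _ => abs_nonneg t

lemma hasDerivAt_exp_neg_abs {t : ℝ} (ht : t ≠ 0) :
    HasDerivAt (fun t : ℝ => exp (-|t|)) (-SignType.sign t * exp (-|t|)) t := by
  simpa [mul_comm] using (hasDerivAt_abs ht).neg.exp

lemma measurable_sign_real : Measurable fun t : ℝ => (SignType.sign t : ℝ) := by
  refine Monotone.measurable fun a b hab => ?_
  simp only [sign_apply]
  split_ifs <;> norm_num <;> linarith

section Gaussian

lemma integral_gaussianReal_eq_integral_add {E : Type*} [NormedAddCommGroup E] [NormedSpace ℝ E]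
    (g : ℝ → E) (μ : ℝ) (v : ℝ≥0) :
    ∫ t, g t ∂gaussianReal μ v = ∫ z, g (z + μ) ∂gaussianReal 0 v := by
  have h := gaussianReal_map_add_const (μ := 0) (v := v) μ
  rw [zero_add] at h
  rw [← h]
  exact integral_map_equiv (MeasurableEquiv.addRight μ) g

lemma LipschitzWith.integrable_gaussianReal {f : ℝ → ℝ} {K : ℝ≥0} (hf : LipschitzWith K f)
    (μ : ℝ) (v : ℝ≥0) : Integrable f (gaussianReal μ v) := by
  have hid : Integrable (fun t : ℝ => t) (gaussianReal μ v) :=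
    (memLp_id_gaussianReal 1).integrable le_rfl
  refine ((integrable_const |f 0|).add (hid.abs.const_mul K)).mono'
    hf.continuous.aestronglyMeasurable (ae_of_all _ fun t => ?_)
  have h := hf.dist_le_mul t 0
  rw [Real.dist_eq, Real.dist_eq, sub_zero] at h
  show |f t| ≤ |f 0| + K * |t|
  linarith [abs_sub_abs_le_abs_sub (f t) (f 0)]

lemma integral_gaussianReal_neg_mean_of_odd {ψ : ℝ → ℝ} (hψ : ∀ t, ψ (-t) = -ψ t)
    (μ : ℝ) (v : ℝ≥0) :
    ∫ t, ψ t ∂gaussianReal (-μ) v = -∫ t, ψ t ∂gaussianReal μ v := by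
  rw [← gaussianReal_map_neg, ← integral_neg]
  simp_rw [← hψ]
  exact integral_map_equiv (MeasurableEquiv.neg ℝ) ψ

variable {μ : ℝ} {v : ℝ≥0}

theorem hasDerivAt_integral_gaussianReal {f f' : ℝ → ℝ} {K : ℝ≥0} (hf : LipschitzWith K f)
    (hf' : Measurable f') (hderiv : ∀ᵐ t ∂gaussianReal μ v, HasDerivAt f (f' t) t) :
    HasDerivAt (fun m => ∫ t, f t ∂gaussianReal m v) (∫ t, f' t ∂gaussianReal μ v) μ := by
  have hshift : Measure.map (· + μ) (gaussianReal 0 v) = gaussianReal μ v := by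
    simpa using gaussianReal_map_add_const (μ := 0) (v := v) μ
  rw [← hshift] at hderiv
  rw [funext fun m => integral_gaussianReal_eq_integral_add f m v,
    integral_gaussianReal_eq_integral_add f' μ v]
  refine (hasDerivAt_integral_of_dominated_loc_of_lip (bound := fun _ => K) Filter.univ_mem
    (Filter.Eventually.of_forall fun m =>
      (hf.continuous.comp (continuous_add_const m)).aestronglyMeasurable)
    ?_ (hf'.comp (measurable_add_const μ)).aestronglyMeasurable
    (ae_of_all _ fun z => ?_) (integrable_const _) ?_).2
  · have hint := hf.integrable_gaussianReal μ v
    rw [← hshift] at hint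
    exact (integrable_map_equiv (MeasurableEquiv.addRight μ) f).1 hint
  · simpa [Function.comp_def] using
      (hf.comp (isometry_add_left z).lipschitz).lipschitzOnWith (s := univ)
  · filter_upwards [ae_of_ae_map (measurable_add_const μ).aemeasurable hderiv] with z hz
    exact hz.comp_const_add z μ

lemma integrable_gaussianReal_iff_integrable_smul {ψ : ℝ → ℝ} (hv : v ≠ 0) :
    Integrable ψ (gaussianReal μ v) ↔ Integrable fun x => gaussianPDFReal μ v x • ψ x := by
  rw [gaussianReal_of_var_ne_zero _ hv, integrable_withDensity_iff_integrable_smul'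
    (measurable_gaussianPDF μ v) (ae_of_all _ fun _ => gaussianPDF_lt_top)]
  simp [gaussianPDF, gaussianPDFReal_nonneg]

lemma integrable_gaussianReal_neg_mean_of_odd {ψ : ℝ → ℝ} (hψ : ∀ t, ψ (-t) = -ψ t)
    (hint : Integrable ψ (gaussianReal μ v)) : Integrable ψ (gaussianReal (-μ) v) := by
  rw [← gaussianReal_map_neg]
  refine (integrable_map_equiv (MeasurableEquiv.neg ℝ) ψ).2 ?_
  simpa [Function.comp_def, hψ] using hint.neg

lemma mul_mul_gaussianPDFReal_sub_pos {x : ℝ} (hv : v ≠ 0) (hμx : μ * x ≠ 0) :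
    0 < μ * x * (gaussianPDFReal μ v x - gaussianPDFReal (-μ) v x) := by
  simp only [gaussianPDFReal, ← mul_sub]
  have hc : 0 < (√(2 * π * v))⁻¹ := by positivity
  have hv2 : (0 : ℝ) < 2 * v := by positivity
  rcases hμx.lt_or_gt with h | h
  · have : exp (-(x - μ) ^ 2 / (2 * v)) < exp (-(x - -μ) ^ 2 / (2 * v)) := by
      rw [exp_lt_exp, div_lt_div_iff_of_pos_right hv2]; nlinarith
    exact mul_pos_of_neg_of_neg h (mul_neg_of_pos_of_neg hc (sub_neg.2 this))
  · have : exp (-(x - -μ) ^ 2 / (2 * v)) < exp (-(x - μ) ^ 2 / (2 * v)) := by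
      rw [exp_lt_exp, div_lt_div_iff_of_pos_right hv2]; nlinarith
    exact mul_pos h (mul_pos hc (sub_pos.2 this))

theorem mul_integral_gaussianReal_neg_of_odd {ψ : ℝ → ℝ} (hodd : ∀ t, ψ (-t) = -ψ t)
    (hsign : ∀ t ≠ 0, t * ψ t < 0) (hint : Integrable ψ (gaussianReal μ v))
    (hv : v ≠ 0) (hμ : μ ≠ 0) :
    μ * ∫ t, ψ t ∂gaussianReal μ v < 0 := by
  set D : ℝ → ℝ := fun x => gaussianPDFReal μ v x - gaussianPDFReal (-μ) v x
  have hint_pos := (integrable_gaussianReal_iff_integrable_smul hv).1 hint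
  have hint_neg := (integrable_gaussianReal_iff_integrable_smul hv).1
    (integrable_gaussianReal_neg_mean_of_odd hodd hint)
  have hdiff : 2 * (μ * ∫ t, ψ t ∂gaussianReal μ v) = ∫ x, μ * ψ x * D x := by
    calc 2 * (μ * ∫ t, ψ t ∂gaussianReal μ v)
        = μ * ((∫ t, ψ t ∂gaussianReal μ v) - ∫ t, ψ t ∂gaussianReal (-μ) v) := by
          rw [integral_gaussianReal_neg_mean_of_odd hodd]; ring
      _ = _ := by
          rw [integral_gaussianReal_eq_integral_smul hv, integral_gaussianReal_eq_integral_smul hv,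
            ← integral_sub hint_pos hint_neg, ← integral_const_mul]
          congr 1; ext x; simp only [D, smul_eq_mul]; ring
  have hneg : ∀ x ≠ 0, μ * ψ x * D x < 0 := by
    intro x hx
    have hprod : μ * ψ x * D x * x ^ 2 = (μ * x * D x) * (x * ψ x) := by ring
    refine neg_of_mul_neg_left ?_ (sq_nonneg x)
    rw [hprod]
    exact mul_neg_of_pos_of_neg (mul_mul_gaussianPDFReal_sub_pos hv (mul_ne_zero hμ hx))
      (hsign x hx)
  have hI : Integrable fun x => μ * ψ x * D x :=
    ((hint_pos.sub hint_neg).const_mul μ).congr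
      (ae_of_all _ fun x => by simp only [D, Pi.sub_apply, smul_eq_mul]; ring)
  have hpos : 0 < ∫ x, -(μ * ψ x * D x) := by
    refine (integral_pos_iff_support_of_nonneg_ae ?_ hI.neg).2 ?_
    · filter_upwards [Measure.ae_ne volume 0] with x hx using (neg_pos.2 (hneg x hx)).le
    · calc (0 : ENNReal) < volume (Ioi (0 : ℝ)) := by simp
        _ ≤ _ := measure_mono fun x hx => (neg_pos.2 (hneg x (ne_of_gt hx))).ne'
  rw [integral_neg] at hpos
  linarith

end Gaussian

lemma toNNReal_sq_ne_zero {σ : ℝ} (hσ : σ ≠ 0) : (σ ^ 2).toNNReal ≠ 0 := by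
  simpa using hσ

lemma hasDerivAt_gConv_s19 {σ : ℝ} (hσ : σ ≠ 0) (μ : ℝ) :
    HasDerivAt (gConv σ)
      (∫ t, -SignType.sign t * exp (-|t|) ∂gaussianReal μ (σ ^ 2).toNNReal) μ := by
  have := nullSingletonClass_gaussianReal (μ := μ) (toNNReal_sq_ne_zero hσ)
  refine hasDerivAt_integral_gaussianReal lipschitzWith_exp_neg_abs
    (measurable_sign_real.neg.mul measurable_id.abs.neg.exp) ?_
  filter_upwards [Measure.ae_ne _ 0] with t ht using hasDerivAt_exp_neg_abs ht

lemma deriv_gConv_mul_self_neg {σ μ : ℝ} (hσ : σ ≠ 0) (hμ : μ ≠ 0) :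
    deriv (gConv σ) μ * μ < 0 := by
  rw [(hasDerivAt_gConv_s19 hσ μ).deriv, mul_comm]
  refine mul_integral_gaussianReal_neg_of_odd (fun t => ?_) (fun t ht => ?_) ?_
    (toNNReal_sq_ne_zero hσ) hμ
  · simp [Left.sign_neg]
  · have : t * (-SignType.sign t * exp (-|t|)) = -(|t| * exp (-|t|)) := by
      rw [← self_mul_sign]; ring
    rw [this, neg_neg_iff_pos]
    exact mul_pos (abs_pos.2 ht) (exp_pos _)
  · refine (lipschitzWith_exp_neg_abs.integrable_gaussianReal _ _).mono'
      (measurable_sign_real.neg.mul measurable_id.abs.neg.exp).aestronglyMeasurable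
      (ae_of_all _ fun t => ?_)
    rw [norm_mul, norm_neg, norm_of_nonneg (exp_nonneg _)]
    refine mul_le_of_le_one_left (exp_nonneg _) ?_
    rcases lt_trichotomy t 0 with h | rfl | h <;> simp [*]

lemma integral_neg_of_nonpos_of_measure_pos {α : Type*} [MeasurableSpace α] {P : Measure α}
    {f : α → ℝ} (hf : ∀ a, f a ≤ 0) (hfi : Integrable f P) {s : Set α} (hs : ∀ a ∈ s, f a < 0)
    (hPs : 0 < P s) : ∫ a, f a ∂P < 0 := by
  have hpos : 0 < ∫ a, -f a ∂P := by
    refine (integral_pos_iff_support_of_nonneg (fun a => neg_nonneg.2 (hf a)) hfi.neg).2 ?_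
    exact hPs.trans_le (measure_mono fun a ha => (neg_pos.2 (hs a ha)).ne')
  rw [integral_neg] at hpos
  linarith

theorem signal_direction_gradient_general
    {d : ℕ} {Ω : Type*} [MeasureSpace Ω] (P : Measure Ω)
    (x₁ : Ω → EuclideanSpace ℝ (Fin d))
    (w₁ : EuclideanSpace ℝ (Fin d)) (σ : ℝ) (hσ : 0 < σ)
    (hint : Integrable
      (fun ω => deriv (fun m => gConv σ m) (inner ℝ w₁ (x₁ ω) : ℝ) *
        (inner ℝ w₁ (x₁ ω) : ℝ)) P) :
    (∀ μ : ℝ, μ ≠ 0 → deriv (fun m => gConv σ m) μ * μ < 0) ∧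
    (∫ ω, deriv (fun m => gConv σ m) (inner ℝ w₁ (x₁ ω) : ℝ) *
        (inner ℝ w₁ (x₁ ω) : ℝ) ∂P) ≤ 0 ∧
    (0 < P {ω | (inner ℝ w₁ (x₁ ω) : ℝ) ≠ 0} →
      (∫ ω, deriv (fun m => gConv σ m) (inner ℝ w₁ (x₁ ω) : ℝ) *
        (inner ℝ w₁ (x₁ ω) : ℝ) ∂P) < 0) := by
  have hneg : ∀ μ : ℝ, μ ≠ 0 → deriv (gConv σ) μ * μ < 0 :=
    fun μ hμ => deriv_gConv_mul_self_neg hσ.ne' hμ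
  have hnonpos : ∀ μ : ℝ, deriv (gConv σ) μ * μ ≤ 0 := fun μ => by
    rcases eq_or_ne μ 0 with rfl | hμ
    · rw [mul_zero]
    · exact (hneg μ hμ).le
  exact ⟨hneg, integral_nonpos fun ω => hnonpos _,
    integral_neg_of_nonpos_of_measure_pos (fun ω => hnonpos _) hint fun ω hω => hneg _ hω⟩

/-- The signal direction is never shrunk: `g_σ'(μ)·μ < 0` for `μ ≠ 0`, and consequently
`E[g_σ'(w₁ᵀx₁)·(w₁ᵀx₁)] ≤ 0`, strictly whenever `P(w₁ᵀx₁ ≠ 0) > 0`. -/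
theorem signal_direction_gradient
    {d : ℕ} {Ω : Type*} [MeasureSpace Ω] (P : Measure Ω) [IsProbabilityMeasure P]
    (x₁ : Ω → EuclideanSpace ℝ (Fin d)) (hmeas : Measurable x₁)
    (w₁ : EuclideanSpace ℝ (Fin d)) (σ : ℝ) (hσ : 0 < σ)
    (hint : Integrable
      (fun ω => deriv (fun m => gConv σ m) (inner ℝ w₁ (x₁ ω) : ℝ) *
        (inner ℝ w₁ (x₁ ω) : ℝ)) P) :
    (∀ μ : ℝ, μ ≠ 0 → deriv (fun m => gConv σ m) μ * μ < 0) ∧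
    (∫ ω, deriv (fun m => gConv σ m) (inner ℝ w₁ (x₁ ω) : ℝ) *
        (inner ℝ w₁ (x₁ ω) : ℝ) ∂P) ≤ 0 ∧
    (0 < P {ω | (inner ℝ w₁ (x₁ ω) : ℝ) ≠ 0} →
      (∫ ω, deriv (fun m => gConv σ m) (inner ℝ w₁ (x₁ ω) : ℝ) *
        (inner ℝ w₁ (x₁ ω) : ℝ) ∂P) < 0) :=
  signal_direction_gradient_general P x₁ w₁ σ hσ hint
end
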